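/- The deterministic context-free language {c aⁿ bⁿ : n ≥ 0} ∪ {d a²ⁿ bⁿ : n ≥ 0} is not accepted by any deterministic strongly limited automaton. -/

import Mathlib

/-! # Strongly limited automata (Pighizzini 2015)

A strongly limited automaton works on the tape segment initially containing the
input (with end-markers).  While moving right it is always in the single state
`q₀` and may only move right over cells, or rewrite a not-yet-rewritten cell and
turn left entering a state of `Q_L`; while moving left in a state of `Q_L` it
rewrites every not-yet-rewritten cell it meets without changing state, until it
turns right, re-entering `q₀`; cells already rewritten are always skipped without
any state change.  When `q₀` reaches the right end-marker, the automaton accepts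
iff the final tape content, with the end-markers, belongs to a fixed
2-strictly-locally-testable (local) language, verified in a last right-to-left
scan. -/

/-- A strongly limited automaton over input alphabet `α`. -/
structure SLA (α : Type) : Type 1 where
  /-- the states used while moving to the left (`q₀` is kept implicit) -/
  QL : Type
  [finQL : Fintype QL]
  /-- the working alphabet (disjoint from the input alphabet) -/
  Γ : Type
  [finΓ : Fintype Γ]
  /-- in `q₀` on a not-yet-rewritten cell `a`: may move right -/
  moveR : α → Prop
  /-- in `q₀` on a not-yet-rewritten cell `a`: may rewrite it by `X` and turn left
  entering a state of `Q_L` -/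
  turnL : α → Set (Γ × QL)
  /-- moving left in `q ∈ Q_L` on a not-yet-rewritten cell `a`: rewrite it by `X`
  and keep moving left in the same state -/
  writeL : QL → α → Set Γ
  /-- moving left in `q ∈ Q_L` on a not-yet-rewritten cell `a`: rewrite it by `X`
  and turn right, re-entering `q₀` -/
  turnR : QL → α → Set Γ
  /-- the allowed length-2 factors of the final tape content including the
  end-markers (`none` denotes an end-marker): a local language -/
  ok : Option (α ⊕ Γ) → Option (α ⊕ Γ) → Prop

namespace SLA

variable {α : Type} (M : SLA α)

/-- A configuration: the tape (each cell holds an original input symbol `Sum.inl a`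
or a rewritten symbol `Sum.inr X`), the head position, and the state
(`none` = `q₀`, `some q` = a left-moving state `q ∈ Q_L`). -/
structure Cfg (M : SLA α) where
  tape : List (α ⊕ M.Γ)
  head : ℕ
  state : Option M.QL

/-- One computation step.  Moving left from cell `0` would reach the left
end-marker, where no transition is defined (hence such computations reject). -/
def Step : Cfg M → Cfg M → Prop := fun c c' =>
  match c.state, c.tape[c.head]? with
  | none, some (Sum.inr _) => c' = ⟨c.tape, c.head + 1, none⟩
  | none, some (Sum.inl a) =>
      (M.moveR a ∧ c' = ⟨c.tape, c.head + 1, none⟩) ∨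
      (∃ p ∈ M.turnL a, c.head ≠ 0 ∧
        c' = ⟨c.tape.set c.head (Sum.inr p.1), c.head - 1, some p.2⟩)
  | some q, some (Sum.inr _) =>
      c.head ≠ 0 ∧ c' = ⟨c.tape, c.head - 1, some q⟩
  | some q, some (Sum.inl a) =>
      (∃ X ∈ M.writeL q a, c.head ≠ 0 ∧
        c' = ⟨c.tape.set c.head (Sum.inr X), c.head - 1, some q⟩) ∨
      (∃ X ∈ M.turnR q a, c' = ⟨c.tape.set c.head (Sum.inr X), c.head + 1, none⟩)
  | _, none => False

/-- `M` accepts `w` iff, starting in `q₀` on the first cell, it can reach the right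
end-marker in `q₀` with a final tape content that has no forbidden length-2 factor
(end-markers included). -/
def Accepts (w : List α) : Prop :=
  ∃ t : List (α ⊕ M.Γ),
    Relation.ReflTransGen M.Step ⟨w.map Sum.inl, 0, none⟩ ⟨t, w.length, none⟩ ∧
    List.Chain' M.ok (none :: t.map some ++ [none])

/-- The language accepted by `M`. -/
def lang : Language α := { w | M.Accepts w }

/-- `M` is deterministic: every configuration admits at most one transition. -/
def Deterministic : Prop :=
  (∀ a, (M.turnL a).Subsingleton ∧ (M.moveR a → M.turnL a = ∅)) ∧
  (∀ q a, (M.writeL q a).Subsingleton ∧ (M.turnR q a).Subsingleton ∧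
    (M.writeL q a = ∅ ∨ M.turnR q a = ∅))

/-- The size of a strongly limited automaton: number of states plus size of the
working alphabet. -/
def size : ℕ := @Fintype.card M.QL M.finQL + @Fintype.card M.Γ M.finΓ

end SLA

/-! # Deterministic pushdown automata -/

/-- A deterministic pushdown automaton over input alphabet `α`, accepting by final
state. -/
structure DPDA (α : Type) : Type 1 where
  Q : Type
  [finQ : Fintype Q]
  /-- stack alphabet -/
  S : Type
  [finS : Fintype S]
  init : Q
  /-- initial stack symbol -/
  Z0 : S
  final : Q → Prop
  /-- transition on an input symbol (`some a`) or an ε-move (`none`), reading the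
  topmost stack symbol; the read stack symbol is replaced by the returned string. -/
  trans : Q → Option α → S → Option (Q × List S)
  /-- determinism: no ε-move is available whenever a reading move is available -/
  det : ∀ q a Z, (trans q (some a) Z).isSome → trans q none Z = none

namespace DPDA

variable {α : Type} (M : DPDA α)

/-- One step on configurations (state, remaining input, stack). -/
def Step : M.Q × List α × List M.S → M.Q × List α × List M.S → Prop := fun c c' =>
  ∃ Z s, c.2.2 = Z :: s ∧
    ((∃ r, M.trans c.1 none Z = some r ∧ c' = (r.1, c.2.1, r.2 ++ s)) ∨
     (∃ a w r, c.2.1 = a :: w ∧ M.trans c.1 (some a) Z = some r ∧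
        c' = (r.1, w, r.2 ++ s)))

/-- The language accepted by `M` (by final state, after reading all the input). -/
def lang : Language α :=
  { w | ∃ q s, Relation.ReflTransGen M.Step (M.init, w, [M.Z0]) (q, [], s) ∧ M.final q }

end DPDA

/-- A language is deterministic context-free if it is accepted by some deterministic
pushdown automaton. -/
def Language.IsDetContextFree {α : Type} (L : Language α) : Prop :=
  ∃ M : DPDA α, M.lang = L

/-- The four-letter alphabet `{a, b, c, d}`. -/
inductive ABCD : Type
  | a | b | c | d
deriving DecidableEq

instance instFintypeABCD : Fintype ABCD :=
  ⟨{ABCD.a, ABCD.b, ABCD.c, ABCD.d}, fun x => by cases x <;> simp⟩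

open ABCD in
/-- The language `{c aⁿ bⁿ : n ≥ 0} ∪ {d a²ⁿ bⁿ : n ≥ 0}`. -/
def L18 : Language ABCD :=
  { x | (∃ n : ℕ, x = c :: (List.replicate n a ++ List.replicate n b)) ∨
        (∃ n : ℕ, x = d :: (List.replicate (2 * n) a ++ List.replicate n b)) }


/-! ## Part 1: a DPDA for L18 -/

section Part1
open ABCD

inductive Q11 : Type
  | q0 | c0 | ca | cb | cf | d0 | d1 | dE | dO | dB | dF
deriving DecidableEq

instance : Fintype Q11 :=
  ⟨{Q11.q0, Q11.c0, Q11.ca, Q11.cb, Q11.cf, Q11.d0, Q11.d1, Q11.dE, Q11.dO, Q11.dB, Q11.dF},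
    fun x => by cases x <;> simp⟩

inductive S3 : Type
  | Z | A | A'
deriving DecidableEq

instance : Fintype S3 :=
  ⟨{S3.Z, S3.A, S3.A'}, fun x => by cases x <;> simp⟩

open Q11 S3

/-- transition function of the concrete DPDA (no ε-moves) -/
def dtrans : Q11 → ABCD → S3 → Option (Q11 × List S3)
  | q0, c, Z => some (c0, [Z])
  | q0, d, Z => some (d0, [Z])
  | c0, a, Z => some (ca, [A', Z])
  | ca, a, A => some (ca, [A, A])
  | ca, a, A' => some (ca, [A, A'])
  | ca, b, A => some (cb, [])
  | ca, b, A' => some (cf, [])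
  | cb, b, A => some (cb, [])
  | cb, b, A' => some (cf, [])
  | d0, a, Z => some (d1, [Z])
  | d1, a, Z => some (dE, [A', Z])
  | dE, a, A => some (dO, [A])
  | dE, a, A' => some (dO, [A'])
  | dO, a, A => some (dE, [A, A])
  | dO, a, A' => some (dE, [A, A'])
  | dE, b, A => some (dB, [])
  | dE, b, A' => some (dF, [])
  | dB, b, A => some (dB, [])
  | dB, b, A' => some (dF, [])
  | _, _, _ => none

def dfinal : Q11 → Prop := fun q => q = c0 ∨ q = cf ∨ q = d0 ∨ q = dF

def D18 : DPDA ABCD where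
  Q := Q11
  S := S3
  init := q0
  Z0 := Z
  final := dfinal
  trans := fun q x T => match x with | none => none | some y => dtrans q y T
  det := by intro q a Z _; rfl

/-- step function: run the automaton on a word -/
def drun : Q11 → List S3 → List ABCD → Option (Q11 × List S3)
  | q, s, [] => some (q, s)
  | _, [], _ :: _ => none
  | q, T :: s, x :: w =>
      match dtrans q x T with
      | none => none
      | some r => drun r.1 (r.2 ++ s) w

end Part1

section Part1b
open ABCD Q11 S3

lemma drun_sound : ∀ (w : List ABCD) (q : Q11) (s : List S3) (q' : Q11) (s' : List S3),
    drun q s w = some (q', s') →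
    Relation.ReflTransGen D18.Step (q, w, s) (q', [], s') := by
  intro w
  induction w with
  | nil => intro q s q' s' h; simp [drun] at h; rw [h.1, h.2]
  | cons x w ih =>
      intro q s q' s' h
      match s with
      | [] => simp [drun] at h
      | T :: s =>
          rw [drun] at h
          match htr : dtrans q x T with
          | none => rw [htr] at h; simp at h
          | some r =>
              rw [htr] at h; simp at h
              refine Relation.ReflTransGen.head ?_ (ih _ _ _ _ h)
              exact ⟨T, s, rfl, Or.inr ⟨x, w, r, rfl, by simp [D18, htr], rfl⟩⟩

lemma drun_complete : ∀ (cfg : Q11 × List ABCD × List S3) (q' : Q11) (s' : List S3),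
    Relation.ReflTransGen D18.Step cfg (q', [], s') →
    drun cfg.1 cfg.2.2 cfg.2.1 = some (q', s') := by
  intro cfg q' s' h
  induction h using Relation.ReflTransGen.head_induction_on with
  | refl => simp [drun]
  | head hstep _ ih =>
      obtain ⟨T, s, hs, hcase⟩ := hstep
      rcases hcase with ⟨r, hr, _⟩ | ⟨x, w, r, hw, hr, hc⟩
      · simp [D18] at hr
      · have hr' : dtrans _ x T = some r := hr
        rw [hs, hw]
        simp only [drun, hr']
        rw [hc] at ih
        exact ih

lemma D18_lang_iff (w : List ABCD) :
    w ∈ D18.lang ↔ ∃ q s, drun q0 [Z] w = some (q, s) ∧ dfinal q := by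
  constructor
  · rintro ⟨q, s, h, hf⟩
    exact ⟨q, s, drun_complete _ _ _ h, hf⟩
  · rintro ⟨q, s, h, hf⟩
    exact ⟨q, s, drun_sound _ _ _ _ _ h, hf⟩

end Part1b

section Part1c
open ABCD Q11 S3

lemma drun_push_c : ∀ (n : ℕ) (t : S3) (s : List S3), t = A ∨ t = A' →
    drun ca (t :: s) (List.replicate n a) = some (ca, List.replicate n A ++ t :: s) := by
  intro n
  induction n with
  | zero => intro t s _; simp [drun]
  | succ n ih =>
      intro t s ht
      rw [List.replicate_succ, drun]
      rcases ht with rfl | rfl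
      · show drun ca (A :: A :: s) _ = _
        rw [ih A (A :: s) (Or.inl rfl)]
        rw [List.replicate_succ']
        simp
      · show drun ca (A :: A' :: s) _ = _
        rw [ih A (A' :: s) (Or.inl rfl)]
        rw [List.replicate_succ']
        simp

lemma drun_pop_cb : ∀ (n : ℕ) (s : List S3),
    drun cb (List.replicate n A ++ A' :: s) (List.replicate (n + 1) b) = some (cf, s) := by
  intro n
  induction n with
  | zero => intro s; simp [drun, dtrans]
  | succ n ih =>
      intro s
      rw [List.replicate_succ, List.replicate_succ (n := n + 1)]
      simpa [drun, dtrans] using ih s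

lemma drun_pop_ca : ∀ (n : ℕ) (s : List S3),
    drun ca (List.replicate n A ++ A' :: s) (List.replicate (n + 1) b) = some (cf, s) := by
  intro n s
  cases n with
  | zero => simp [drun, dtrans]
  | succ n =>
      rw [List.replicate_succ, List.replicate_succ (n := n + 1)]
      simpa [drun, dtrans] using drun_pop_cb n s

lemma drun_append : ∀ (u v : List ABCD) (q : Q11) (s : List S3),
    drun q s (u ++ v) = (drun q s u).bind fun r => drun r.1 r.2 v := by
  intro u
  induction u with
  | nil => intro v q s; simp [drun]
  | cons x u ih =>
      intro v q s
      match s with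
      | [] => simp [drun]
      | T :: s =>
          rw [List.cons_append, drun, drun]
          match htr : dtrans q x T with
          | none => simp
          | some r => simp only; exact ih v r.1 (r.2 ++ s)

lemma drun_c (n : ℕ) :
    ∃ q s, drun q0 [Z] (c :: (List.replicate n a ++ List.replicate n b)) = some (q, s)
      ∧ dfinal q := by
  cases n with
  | zero => exact ⟨c0, [Z], by simp [drun, dtrans], Or.inl rfl⟩
  | succ m =>
      refine ⟨cf, [Z], ?_, Or.inr (Or.inl rfl)⟩
      rw [List.replicate_succ, List.cons_append]
      have : drun q0 [Z] (c :: (a :: (List.replicate m a ++ List.replicate (m+1) b)))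
          = drun ca [A', Z] (List.replicate m a ++ List.replicate (m+1) b) := by
        simp [drun, dtrans]
      rw [this, drun_append, drun_push_c m A' [Z] (Or.inr rfl)]
      simpa using drun_pop_ca m [Z]

end Part1c

section Part1d
open ABCD Q11 S3

lemma drun_push_d : ∀ (n : ℕ) (t : S3) (s : List S3), t = A ∨ t = A' →
    drun dE (t :: s) (List.replicate (2 * n) a) = some (dE, List.replicate n A ++ t :: s) := by
  intro n
  induction n with
  | zero => intro t s _; simp [drun]
  | succ n ih =>
      intro t s ht
      have h2 : 2 * (n + 1) = (2 * n) + 1 + 1 := by ring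
      rw [h2, List.replicate_succ, List.replicate_succ]
      have step : drun dE (t :: s) (a :: a :: List.replicate (2 * n) a)
          = drun dE (A :: t :: s) (List.replicate (2 * n) a) := by
        rcases ht with rfl | rfl <;> simp [drun, dtrans]
      rw [step, ih A (t :: s) (Or.inl rfl), List.replicate_succ']
      simp

lemma drun_pop_dB : ∀ (n : ℕ) (s : List S3),
    drun dB (List.replicate n A ++ A' :: s) (List.replicate (n + 1) b) = some (dF, s) := by
  intro n
  induction n with
  | zero => intro s; simp [drun, dtrans]
  | succ n ih =>
      intro s
      rw [List.replicate_succ, List.replicate_succ (n := n + 1)]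
      simpa [drun, dtrans] using ih s

lemma drun_pop_dE : ∀ (n : ℕ) (s : List S3),
    drun dE (List.replicate n A ++ A' :: s) (List.replicate (n + 1) b) = some (dF, s) := by
  intro n s
  cases n with
  | zero => simp [drun, dtrans]
  | succ n =>
      rw [List.replicate_succ, List.replicate_succ (n := n + 1)]
      simpa [drun, dtrans] using drun_pop_dB n s

lemma drun_d (n : ℕ) :
    ∃ q s, drun q0 [Z] (d :: (List.replicate (2 * n) a ++ List.replicate n b)) = some (q, s)
      ∧ dfinal q := by
  cases n with
  | zero => exact ⟨d0, [Z], by simp [drun, dtrans], Or.inr (Or.inr (Or.inl rfl))⟩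
  | succ m =>
      refine ⟨dF, [Z], ?_, Or.inr (Or.inr (Or.inr rfl))⟩
      have h2 : 2 * (m + 1) = (2 * m) + 1 + 1 := by ring
      rw [h2, List.replicate_succ, List.replicate_succ, List.cons_append, List.cons_append]
      have : drun q0 [Z] (d :: (a :: a :: (List.replicate (2*m) a ++ List.replicate (m+1) b)))
          = drun dE [A', Z] (List.replicate (2*m) a ++ List.replicate (m+1) b) := by
        simp [drun, dtrans]
      rw [this, drun_append, drun_push_d m A' [Z] (Or.inr rfl)]
      simpa using drun_pop_dE m [Z]

end Part1d

section Part1e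
open ABCD Q11 S3

lemma dtrans_cf : ∀ (x : ABCD) (T : S3), dtrans cf x T = none := by
  intro x T; cases x <;> cases T <;> rfl

lemma dtrans_dF : ∀ (x : ABCD) (T : S3), dtrans dF x T = none := by
  intro x T; cases x <;> cases T <;> rfl

lemma sound_cf : ∀ (v : List ABCD) (s : List S3) (q' : Q11) (s' : List S3),
    drun cf s v = some (q', s') → v = [] := by
  intro v s q' s' h
  cases v with
  | nil => rfl
  | cons x v =>
      match s with
      | [] => simp [drun] at h
      | T :: s => rw [drun, dtrans_cf] at h; simp at h

lemma sound_dF : ∀ (v : List ABCD) (s : List S3) (q' : Q11) (s' : List S3),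
    drun dF s v = some (q', s') → v = [] := by
  intro v s q' s' h
  cases v with
  | nil => rfl
  | cons x v =>
      match s with
      | [] => simp [drun] at h
      | T :: s => rw [drun, dtrans_dF] at h; simp at h

lemma sound_cb : ∀ (v : List ABCD) (n : ℕ) (s : List S3) (q' : Q11) (s' : List S3),
    drun cb (List.replicate n A ++ A' :: s) v = some (q', s') → dfinal q' →
    v = List.replicate (n + 1) b := by
  intro v
  induction v with
  | nil =>
      intro n s q' s' h hf
      simp [drun] at h
      rw [← h.1] at hf
      simp [dfinal] at hf
  | cons x v ih =>
      intro n s q' s' h hf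
      cases n with
      | zero =>
          cases x <;> simp [drun, dtrans] at h
          simp [sound_cf v s q' s' h]
      | succ n =>
          cases x <;> rw [List.replicate_succ, List.cons_append] at h <;>
            simp [drun, dtrans] at h
          rw [List.replicate_succ (n := n + 1), ih n s q' s' h hf]

lemma sound_ca : ∀ (v : List ABCD) (n : ℕ) (s : List S3) (q' : Q11) (s' : List S3),
    drun ca (List.replicate n A ++ A' :: s) v = some (q', s') → dfinal q' →
    ∃ k, v = List.replicate k a ++ List.replicate (n + k + 1) b := by
  intro v
  induction v with
  | nil =>
      intro n s q' s' h hf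
      simp [drun] at h
      rw [← h.1] at hf
      simp [dfinal] at hf
  | cons x v ih =>
      intro n s q' s' h hf
      cases n with
      | zero =>
          cases x <;> simp only [List.replicate_zero, List.nil_append] at h <;>
            simp [drun, dtrans] at h
          · -- x = a, moved to stack [A, A'] ++ s
            obtain ⟨k, hk⟩ := ih 1 s q' s' (by simpa [List.replicate] using h) hf
            refine ⟨k + 1, ?_⟩
            rw [hk, show 0 + (k + 1) + 1 = 1 + k + 1 by omega,
              List.replicate_succ (n := k), List.cons_append]
          · -- x = b, to cf
            exact ⟨0, by simp [sound_cf v s q' s' h]⟩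
      | succ n =>
          cases x <;> rw [List.replicate_succ, List.cons_append] at h <;>
            simp [drun, dtrans] at h
          · obtain ⟨k, hk⟩ := ih (n + 2) s q' s'
              (by simpa [List.replicate_succ, List.cons_append] using h) hf
            refine ⟨k + 1, ?_⟩
            rw [hk, show n + 1 + (k + 1) + 1 = n + 2 + k + 1 by omega,
              List.replicate_succ (n := k), List.cons_append]
          · refine ⟨0, ?_⟩
            rw [sound_cb v n s q' s' h hf,
              show n + 1 + 0 + 1 = n + 1 + 1 by omega,
              List.replicate_succ (n := n + 1)]
            simp

lemma sound_c0 : ∀ (v : List ABCD) (q' : Q11) (s' : List S3),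
    drun c0 [Z] v = some (q', s') → dfinal q' →
    ∃ k, v = List.replicate k a ++ List.replicate k b := by
  intro v q' s' h hf
  cases v with
  | nil => exact ⟨0, rfl⟩
  | cons x v =>
      cases x <;> simp [drun, dtrans] at h
      obtain ⟨k, hk⟩ := sound_ca v 0 [Z] q' s' (by simpa using h) hf
      refine ⟨k + 1, ?_⟩
      rw [hk, show 0 + k + 1 = k + 1 by omega,
        List.replicate_succ (n := k) (a := a), List.replicate_succ (n := k) (a := b),
        List.cons_append]

end Part1e

section Part1f
open ABCD Q11 S3

lemma sound_dB : ∀ (v : List ABCD) (n : ℕ) (s : List S3) (q' : Q11) (s' : List S3),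
    drun dB (List.replicate n A ++ A' :: s) v = some (q', s') → dfinal q' →
    v = List.replicate (n + 1) b := by
  intro v
  induction v with
  | nil =>
      intro n s q' s' h hf
      simp [drun] at h
      rw [← h.1] at hf
      simp [dfinal] at hf
  | cons x v ih =>
      intro n s q' s' h hf
      cases n with
      | zero =>
          cases x <;> simp [drun, dtrans] at h
          simp [sound_dF v s q' s' h]
      | succ n =>
          cases x <;> rw [List.replicate_succ, List.cons_append] at h <;>
            simp [drun, dtrans] at h
          rw [List.replicate_succ (n := n + 1), ih n s q' s' h hf]

lemma sound_dEO : ∀ (v : List ABCD) (n : ℕ) (s : List S3) (q' : Q11) (s' : List S3),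
    (drun dE (List.replicate n A ++ A' :: s) v = some (q', s') → dfinal q' →
      ∃ k, v = List.replicate (2 * k) a ++ List.replicate (n + k + 1) b) ∧
    (drun dO (List.replicate n A ++ A' :: s) v = some (q', s') → dfinal q' →
      ∃ k, v = List.replicate (2 * k + 1) a ++ List.replicate (n + k + 2) b) := by
  intro v
  induction v with
  | nil =>
      intro n s q' s' 
      constructor <;> intro h hf <;> simp [drun] at h <;> rw [← h.1] at hf <;>
        simp [dfinal] at hf
  | cons x v ih =>
      intro n s q' s'
      constructor
      · intro h hf
        cases n with
        | zero =>
            cases x <;> simp only [List.replicate_zero, List.nil_append] at h <;>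
              simp [drun, dtrans] at h
            · -- x = a : to dO, stack unchanged [A' :: s]
              obtain ⟨k, hk⟩ := (ih 0 s q' s').2 (by simpa using h) hf
              refine ⟨k + 1, ?_⟩
              rw [hk, show 2 * (k + 1) = 2 * k + 1 + 1 by omega,
                show 0 + (k + 1) + 1 = 0 + k + 2 by omega,
                List.replicate_succ (n := 2 * k + 1), List.cons_append]
            · -- x = b : to dF
              exact ⟨0, by simp [sound_dF v s q' s' h]⟩
        | succ n =>
            cases x <;> rw [List.replicate_succ, List.cons_append] at h <;>
              simp [drun, dtrans] at h
            · -- x = a : to dO, stack unchanged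
              obtain ⟨k, hk⟩ := (ih (n + 1) s q' s').2
                (by simpa [List.replicate_succ, List.cons_append] using h) hf
              refine ⟨k + 1, ?_⟩
              rw [hk, show 2 * (k + 1) = 2 * k + 1 + 1 by omega,
                show n + 1 + (k + 1) + 1 = n + 1 + k + 2 by omega,
                List.replicate_succ (n := 2 * k + 1), List.cons_append]
            · -- x = b : to dB
              refine ⟨0, ?_⟩
              rw [sound_dB v n s q' s' h hf,
                show n + 1 + 0 + 1 = n + 1 + 1 by omega,
                show 2 * 0 = 0 by omega,
                List.replicate_succ (n := n + 1)]
              simp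
      · intro h hf
        cases n with
        | zero =>
            cases x <;> simp only [List.replicate_zero, List.nil_append] at h <;>
              simp [drun, dtrans] at h
            -- x = a : to dE, stack [A, A'] ++ s
            obtain ⟨k, hk⟩ := (ih 1 s q' s').1 (by simpa [List.replicate] using h) hf
            refine ⟨k, ?_⟩
            rw [hk, show 1 + k + 1 = 0 + k + 2 by omega,
              List.replicate_succ (n := 2 * k), List.cons_append]
        | succ n =>
            cases x <;> rw [List.replicate_succ, List.cons_append] at h <;>
              simp [drun, dtrans] at h
            obtain ⟨k, hk⟩ := (ih (n + 2) s q' s').1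
              (by simpa [List.replicate_succ, List.cons_append] using h) hf
            refine ⟨k, ?_⟩
            rw [hk, show n + 2 + k + 1 = n + 1 + k + 2 by omega,
              List.replicate_succ (n := 2 * k), List.cons_append]

lemma sound_d0 : ∀ (v : List ABCD) (q' : Q11) (s' : List S3),
    drun d0 [Z] v = some (q', s') → dfinal q' →
    ∃ k, v = List.replicate (2 * k) a ++ List.replicate k b := by
  intro v q' s' h hf
  cases v with
  | nil => exact ⟨0, rfl⟩
  | cons x v =>
      cases x <;> simp [drun, dtrans] at h
      -- x = a : to d1
      cases v with
      | nil =>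
          simp [drun] at h
          rw [← h.1] at hf
          simp [dfinal] at hf
      | cons y v =>
          cases y <;> simp [drun, dtrans] at h
          -- y = a : to dE with stack [A', Z]
          obtain ⟨k, hk⟩ := (sound_dEO v 0 [Z] q' s').1 (by simpa using h) hf
          refine ⟨k + 1, ?_⟩
          rw [hk, show 0 + k + 1 = k + 1 by omega,
            show 2 * (k + 1) = 2 * k + 1 + 1 by omega,
            List.replicate_succ (n := 2 * k + 1), List.replicate_succ (n := 2 * k),
            List.replicate_succ (n := k) (a := b), List.cons_append, List.cons_append]

lemma D18_lang_eq : D18.lang = L18 := by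
  ext w
  constructor
  · intro hw
    obtain ⟨q, s, h, hf⟩ := (D18_lang_iff w).1 hw
    cases w with
    | nil =>
        simp [drun] at h
        rw [← h.1] at hf
        simp [dfinal] at hf
    | cons x v =>
        cases x <;> simp [drun, dtrans] at h
        · -- c
          obtain ⟨k, hk⟩ := sound_c0 v q s h hf
          exact Or.inl ⟨k, by rw [hk]⟩
        · -- d
          obtain ⟨k, hk⟩ := sound_d0 v q s h hf
          exact Or.inr ⟨k, by rw [hk]⟩
  · rintro (⟨n, rfl⟩ | ⟨n, rfl⟩)
    · exact (D18_lang_iff _).2 (drun_c n)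
    · exact (D18_lang_iff _).2 (drun_d n)

lemma part1 : L18.IsDetContextFree := ⟨D18, D18_lang_eq⟩

end Part1f

/-! ## Part 2: generic lemmas about deterministic SLAs -/

section Part2a

variable {α : Type} {M : SLA α}

lemma sla_step_det (hdet : M.Deterministic) {c c₁ c₂ : M.Cfg}
    (h₁ : M.Step c c₁) (h₂ : M.Step c c₂) : c₁ = c₂ := by
  obtain ⟨hd1, hd2⟩ := hdet
  unfold SLA.Step at h₁ h₂
  match hs : c.state, ht : c.tape[c.head]? with
  | none, some (Sum.inr X) =>
      rw [hs, ht] at h₁ h₂; rw [h₁, h₂]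
  | none, some (Sum.inl a) =>
      rw [hs, ht] at h₁ h₂
      rcases h₁ with ⟨hm₁, he₁⟩ | ⟨p₁, hp₁, hh₁, he₁⟩ <;>
        rcases h₂ with ⟨hm₂, he₂⟩ | ⟨p₂, hp₂, hh₂, he₂⟩
      · rw [he₁, he₂]
      · rw [(hd1 a).2 hm₁] at hp₂; exact absurd hp₂ (Set.notMem_empty _)
      · rw [(hd1 a).2 hm₂] at hp₁; exact absurd hp₁ (Set.notMem_empty _)
      · rw [he₁, he₂, (hd1 a).1 hp₁ hp₂]
  | some q, some (Sum.inr X) =>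
      rw [hs, ht] at h₁ h₂; rw [h₁.2, h₂.2]
  | some q, some (Sum.inl a) =>
      rw [hs, ht] at h₁ h₂
      rcases h₁ with ⟨X₁, hX₁, hh₁, he₁⟩ | ⟨X₁, hX₁, he₁⟩ <;>
        rcases h₂ with ⟨X₂, hX₂, hh₂, he₂⟩ | ⟨X₂, hX₂, he₂⟩
      · rw [he₁, he₂, (hd2 q a).1 hX₁ hX₂]
      · rcases (hd2 q a).2.2 with h | h
        · rw [h] at hX₁; exact absurd hX₁ (Set.notMem_empty _)
        · rw [h] at hX₂; exact absurd hX₂ (Set.notMem_empty _)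
      · rcases (hd2 q a).2.2 with h | h
        · rw [h] at hX₂; exact absurd hX₂ (Set.notMem_empty _)
        · rw [h] at hX₁; exact absurd hX₁ (Set.notMem_empty _)
      · rw [he₁, he₂, (hd2 q a).2.1 hX₁ hX₂]
  | none, none => rw [hs, ht] at h₁; exact h₁.elim
  | some q, none => rw [hs, ht] at h₁; exact h₁.elim

lemma rtg_det {β : Type*} {r : β → β → Prop}
    (hr : ∀ {x y z : β}, r x y → r x z → y = z)
    {x y z : β} (hy : Relation.ReflTransGen r x y) (hz : Relation.ReflTransGen r x z)
    (hdy : ∀ w, ¬ r y w) (hdz : ∀ w, ¬ r z w) : y = z := by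
  induction hy using Relation.ReflTransGen.head_induction_on with
  | refl =>
      rcases hz.cases_head with h | ⟨c, hc, _⟩
      · exact h
      · exact absurd hc (hdy _)
  | head hstep _ ih =>
      rcases hz.cases_head with h | ⟨c, hc, hc'⟩
      · rw [← h] at hdz; exact absurd hstep (hdz _)
      · rw [hr hstep hc] at *; exact ih hc'

lemma sla_step_len {c c' : M.Cfg} (h : M.Step c c') : c'.tape.length = c.tape.length := by
  unfold SLA.Step at h
  match hs : c.state, ht : c.tape[c.head]? with
  | none, some (Sum.inr X) => rw [hs, ht] at h; rw [h]
  | none, some (Sum.inl a) =>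
      rw [hs, ht] at h
      rcases h with ⟨_, he⟩ | ⟨p, _, _, he⟩ <;> rw [he] <;> simp
  | some q, some (Sum.inr X) => rw [hs, ht] at h; rw [h.2]
  | some q, some (Sum.inl a) =>
      rw [hs, ht] at h
      rcases h with ⟨X, _, _, he⟩ | ⟨X, _, he⟩ <;> rw [he] <;> simp
  | none, none => rw [hs, ht] at h; exact h.elim
  | some q, none => rw [hs, ht] at h; exact h.elim

lemma sla_rtg_len {c c' : M.Cfg} (h : Relation.ReflTransGen M.Step c c') :
    c'.tape.length = c.tape.length := by
  induction h with
  | refl => rfl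
  | tail _ hstep ih => rw [sla_step_len hstep, ih]

lemma sla_accept_dead {t : List (α ⊕ M.Γ)} {n : ℕ} (hn : t.length = n) :
    ∀ c', ¬ M.Step ⟨t, n, none⟩ c' := by
  intro c' h
  unfold SLA.Step at h
  have ht : t[n]? = none := by
    rw [List.getElem?_eq_none_iff]
    omega
  simp only [ht] at h

/-- Master lemma: a deterministic SLA which accepts `w` and whose (unique) run
reaches a dead configuration `e` must have `e` at the right end in state `q₀`
with an `ok` final tape. -/
lemma sla_accepts_endpoint (hdet : M.Deterministic) {w : List α} (h : M.Accepts w)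
    {e : M.Cfg} (hrun : Relation.ReflTransGen M.Step ⟨w.map Sum.inl, 0, none⟩ e)
    (hdead : ∀ c', ¬ M.Step e c') :
    e.head = w.length ∧ e.state = none ∧
      List.Chain' M.ok (none :: e.tape.map some ++ [none]) := by
  obtain ⟨t, ht, hch⟩ := h
  have hlen : t.length = w.length := by
    have := sla_rtg_len ht
    simpa using this
  have heq : (⟨t, w.length, none⟩ : M.Cfg) = e :=
    rtg_det (r := M.Step) (fun h1 h2 => sla_step_det hdet h1 h2) ht hrun (sla_accept_dead hlen) hdead
  rw [← heq]
  exact ⟨rfl, rfl, hch⟩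

end Part2a

section Part2c

variable {α : Type} {M : SLA α}

lemma sla_stepR {T : List (α ⊕ M.Γ)} {k : ℕ} {x : α}
    (hx : T[k]? = some (Sum.inl x)) (hm : M.moveR x) :
    M.Step ⟨T, k, none⟩ ⟨T, k + 1, none⟩ := by
  unfold SLA.Step
  rw [show (⟨T, k, none⟩ : M.Cfg).tape[(⟨T, k, none⟩ : M.Cfg).head]? = some (Sum.inl x) from hx]
  exact Or.inl ⟨hm, rfl⟩

lemma sla_stepSkipR {T : List (α ⊕ M.Γ)} {k : ℕ} {X : M.Γ}
    (hx : T[k]? = some (Sum.inr X)) :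
    M.Step ⟨T, k, none⟩ ⟨T, k + 1, none⟩ := by
  unfold SLA.Step
  rw [show (⟨T, k, none⟩ : M.Cfg).tape[(⟨T, k, none⟩ : M.Cfg).head]? = some (Sum.inr X) from hx]

lemma sla_stepTurnL {T : List (α ⊕ M.Γ)} {k : ℕ} {x : α} {B : M.Γ} {q : M.QL}
    (hx : T[k]? = some (Sum.inl x)) (hB : (B, q) ∈ M.turnL x) (hk : k ≠ 0) :
    M.Step ⟨T, k, none⟩ ⟨T.set k (Sum.inr B), k - 1, some q⟩ := by
  unfold SLA.Step
  rw [show (⟨T, k, none⟩ : M.Cfg).tape[(⟨T, k, none⟩ : M.Cfg).head]? = some (Sum.inl x) from hx]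
  exact Or.inr ⟨(B, q), hB, hk, rfl⟩

lemma sla_stepSkipL {T : List (α ⊕ M.Γ)} {k : ℕ} {X : M.Γ} {q : M.QL}
    (hx : T[k]? = some (Sum.inr X)) (hk : k ≠ 0) :
    M.Step ⟨T, k, some q⟩ ⟨T, k - 1, some q⟩ := by
  unfold SLA.Step
  rw [show (⟨T, k, some q⟩ : M.Cfg).tape[(⟨T, k, some q⟩ : M.Cfg).head]? = some (Sum.inr X) from hx]
  exact ⟨hk, rfl⟩

lemma sla_stepWriteL {T : List (α ⊕ M.Γ)} {k : ℕ} {x : α} {X : M.Γ} {q : M.QL}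
    (hx : T[k]? = some (Sum.inl x)) (hX : X ∈ M.writeL q x) (hk : k ≠ 0) :
    M.Step ⟨T, k, some q⟩ ⟨T.set k (Sum.inr X), k - 1, some q⟩ := by
  unfold SLA.Step
  rw [show (⟨T, k, some q⟩ : M.Cfg).tape[(⟨T, k, some q⟩ : M.Cfg).head]? = some (Sum.inl x) from hx]
  exact Or.inl ⟨X, hX, hk, rfl⟩

lemma sla_stepTurnR {T : List (α ⊕ M.Γ)} {k : ℕ} {x : α} {X : M.Γ} {q : M.QL}
    (hx : T[k]? = some (Sum.inl x)) (hX : X ∈ M.turnR q x) :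
    M.Step ⟨T, k, some q⟩ ⟨T.set k (Sum.inr X), k + 1, none⟩ := by
  unfold SLA.Step
  rw [show (⟨T, k, some q⟩ : M.Cfg).tape[(⟨T, k, some q⟩ : M.Cfg).head]? = some (Sum.inl x) from hx]
  exact Or.inr ⟨X, hX, rfl⟩

/-- dead: in `q₀` at position `0` on an unrewritten cell that does not allow a right move -/
lemma sla_dead0R {T : List (α ⊕ M.Γ)} {x : α}
    (hx : T[0]? = some (Sum.inl x)) (hm : ¬ M.moveR x) :
    ∀ c', ¬ M.Step ⟨T, 0, none⟩ c' := by
  intro c' h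
  unfold SLA.Step at h
  rw [show (⟨T, 0, none⟩ : M.Cfg).tape[(⟨T, 0, none⟩ : M.Cfg).head]? = some (Sum.inl x) from hx] at h
  rcases h with ⟨hm', _⟩ | ⟨p, _, h0, _⟩
  · exact hm hm'
  · exact h0 rfl

/-- dead: in `q₀` on an unrewritten cell with no moves at all -/
lemma sla_deadR {T : List (α ⊕ M.Γ)} {k : ℕ} {x : α}
    (hx : T[k]? = some (Sum.inl x)) (hm : ¬ M.moveR x) (ht : M.turnL x = ∅) :
    ∀ c', ¬ M.Step ⟨T, k, none⟩ c' := by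
  intro c' h
  unfold SLA.Step at h
  rw [show (⟨T, k, none⟩ : M.Cfg).tape[(⟨T, k, none⟩ : M.Cfg).head]? = some (Sum.inl x) from hx] at h
  rcases h with ⟨hm', _⟩ | ⟨p, hp, _, _⟩
  · exact hm hm'
  · rw [ht] at hp; exact hp

/-- dead: moving left at position 0 on a rewritten cell -/
lemma sla_deadL0 {T : List (α ⊕ M.Γ)} {X : M.Γ} {q : M.QL}
    (hx : T[0]? = some (Sum.inr X)) :
    ∀ c', ¬ M.Step ⟨T, 0, some q⟩ c' := by
  intro c' h
  unfold SLA.Step at h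
  rw [show (⟨T, 0, some q⟩ : M.Cfg).tape[(⟨T, 0, some q⟩ : M.Cfg).head]? = some (Sum.inr X) from hx] at h
  exact h.1 rfl

/-- dead: moving left at position 0 on an unrewritten cell with no turn-right move -/
lemma sla_deadL0' {T : List (α ⊕ M.Γ)} {x : α} {q : M.QL}
    (hx : T[0]? = some (Sum.inl x)) (ht : M.turnR q x = ∅) :
    ∀ c', ¬ M.Step ⟨T, 0, some q⟩ c' := by
  intro c' h
  unfold SLA.Step at h
  rw [show (⟨T, 0, some q⟩ : M.Cfg).tape[(⟨T, 0, some q⟩ : M.Cfg).head]? = some (Sum.inl x) from hx] at h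
  rcases h with ⟨X, _, h0, _⟩ | ⟨X, hX, _⟩
  · exact h0 rfl
  · rw [ht] at hX; exact hX

/-- dead: moving left on an unrewritten cell with no moves at all -/
lemma sla_deadL {T : List (α ⊕ M.Γ)} {k : ℕ} {x : α} {q : M.QL}
    (hx : T[k]? = some (Sum.inl x)) (hw : M.writeL q x = ∅) (ht : M.turnR q x = ∅) :
    ∀ c', ¬ M.Step ⟨T, k, some q⟩ c' := by
  intro c' h
  unfold SLA.Step at h
  rw [show (⟨T, k, some q⟩ : M.Cfg).tape[(⟨T, k, some q⟩ : M.Cfg).head]? = some (Sum.inl x) from hx] at h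
  rcases h with ⟨X, hX, _, _⟩ | ⟨X, hX, _⟩
  · rw [hw] at hX; exact hX
  · rw [ht] at hX; exact hX

end Part2c

section Part2main
open ABCD

private lemma not_mem_caab : [c, a, a, b] ∉ L18 := by
  rintro (⟨n, hn⟩ | ⟨n, hn⟩)
  · have := congrArg List.length hn
    simp at this
    omega
  · simp at hn

private lemma not_mem_d5 : [d, a, a, a, a, a, b, b] ∉ L18 := by
  rintro (⟨n, hn⟩ | ⟨n, hn⟩)
  · simp at hn
  · have := congrArg List.length hn
    simp at this
    omega

lemma sla_part2 (M : SLA ABCD) (hdet : M.Deterministic) (hL : M.lang = L18) : False := by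
  have h : ∀ w, M.Accepts w ↔ w ∈ L18 := fun w => Set.ext_iff.mp hL w
  have hca : M.Accepts [c, a, a, b, b] := (h _).2 (Or.inl ⟨2, rfl⟩)
  have hda : M.Accepts [d, a, a, a, a, b, b] := (h _).2 (Or.inr ⟨2, rfl⟩)
  -- the machine must be able to move right over `c`, `d` and `a`
  have hmc : M.moveR c := by
    by_contra hmc
    have he := sla_accepts_endpoint hdet hca Relation.ReflTransGen.refl (sla_dead0R rfl hmc)
    simp at he
  have hmd : M.moveR d := by
    by_contra hmd
    have he := sla_accepts_endpoint hdet hda Relation.ReflTransGen.refl (sla_dead0R rfl hmd)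
    simp at he
  have hma : M.moveR a := by
    by_contra hma
    rcases (M.turnL a).eq_empty_or_nonempty with hta | ⟨⟨X, p⟩, hXp⟩
    · have run : Relation.ReflTransGen M.Step
          ⟨[Sum.inl c, Sum.inl a, Sum.inl a, Sum.inl b, Sum.inl b], 0, none⟩
          ⟨[Sum.inl c, Sum.inl a, Sum.inl a, Sum.inl b, Sum.inl b], 1, none⟩ :=
        .head (sla_stepR rfl hmc) .refl
      have he := sla_accepts_endpoint hdet hca run (sla_deadR rfl hma hta)
      simp at he
    · rcases (M.turnR p c).eq_empty_or_nonempty with htr | ⟨Y, hY⟩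
      · have run : Relation.ReflTransGen M.Step
            ⟨[Sum.inl c, Sum.inl a, Sum.inl a, Sum.inl b, Sum.inl b], 0, none⟩
            ⟨[Sum.inl c, Sum.inr X, Sum.inl a, Sum.inl b, Sum.inl b], 0, some p⟩ :=
          .head (sla_stepR rfl hmc) <| .head (sla_stepTurnL rfl hXp (by omega)) <| .refl
        have he := sla_accepts_endpoint hdet hca run (sla_deadL0' rfl htr)
        simp at he
      · have run : Relation.ReflTransGen M.Step
            ⟨[Sum.inl c, Sum.inl a, Sum.inl a, Sum.inl b, Sum.inl b], 0, none⟩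
            ⟨[Sum.inr Y, Sum.inr X, Sum.inr X, Sum.inl b, Sum.inl b], 0, some p⟩ :=
          .head (sla_stepR rfl hmc) <| .head (sla_stepTurnL rfl hXp (by omega)) <|
          .head (sla_stepTurnR rfl hY) <| .head (sla_stepSkipR rfl) <|
          .head (sla_stepTurnL rfl hXp (by omega)) <| .head (sla_stepSkipL rfl (by omega)) <| .refl
        have he := sla_accepts_endpoint hdet hca run (sla_deadL0 rfl)
        simp at he
  have hnmb : ¬ M.moveR b := by
    intro hmb
    have run : Relation.ReflTransGen M.Step
        ⟨[Sum.inl c, Sum.inl a, Sum.inl a, Sum.inl b, Sum.inl b], 0, none⟩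
        ⟨[Sum.inl c, Sum.inl a, Sum.inl a, Sum.inl b, Sum.inl b], 5, none⟩ :=
      .head (sla_stepR rfl hmc) <| .head (sla_stepR rfl hma) <| .head (sla_stepR rfl hma) <|
      .head (sla_stepR rfl hmb) <| .head (sla_stepR rfl hmb) <| .refl
    have he := sla_accepts_endpoint hdet hca run (sla_accept_dead rfl)
    have hch := he.2.2
    simp only [SLA.Cfg.tape, List.map_cons, List.map_nil, List.cons_append, List.nil_append,
      List.Chain', List.isChain_cons_cons, List.isChain_singleton, and_true] at hch
    obtain ⟨o1, o2, o3, o4, o5, o6⟩ := hch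
    have run4 : Relation.ReflTransGen M.Step
        ⟨[Sum.inl c, Sum.inl a, Sum.inl a, Sum.inl b], 0, none⟩
        ⟨[Sum.inl c, Sum.inl a, Sum.inl a, Sum.inl b], 4, none⟩ :=
      .head (sla_stepR rfl hmc) <| .head (sla_stepR rfl hma) <| .head (sla_stepR rfl hma) <|
      .head (sla_stepR rfl hmb) <| .refl
    refine not_mem_caab ((h _).1 ⟨[Sum.inl c, Sum.inl a, Sum.inl a, Sum.inl b], run4, ?_⟩)
    simp only [List.map_cons, List.map_nil, List.cons_append, List.nil_append,
      List.Chain', List.isChain_cons_cons, List.isChain_singleton, and_true]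
    exact ⟨o1, o2, o3, o4, o6⟩
  obtain ⟨⟨B, q⟩, hBq⟩ : (M.turnL b).Nonempty := by
    rcases (M.turnL b).eq_empty_or_nonempty with htb | hne
    · have run : Relation.ReflTransGen M.Step
          ⟨[Sum.inl c, Sum.inl a, Sum.inl a, Sum.inl b, Sum.inl b], 0, none⟩
          ⟨[Sum.inl c, Sum.inl a, Sum.inl a, Sum.inl b, Sum.inl b], 3, none⟩ :=
        .head (sla_stepR rfl hmc) <| .head (sla_stepR rfl hma) <| .head (sla_stepR rfl hma) <| .refl
      have he := sla_accepts_endpoint hdet hca run (sla_deadR rfl hnmb htb)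
      simp at he
    · exact hne
  rcases (M.turnR q a).eq_empty_or_nonempty with htra | ⟨A, hA⟩
  · -- the left-moving state cannot turn right on `a`
    rcases (M.writeL q a).eq_empty_or_nonempty with hwla | ⟨A, hA⟩
    · have run : Relation.ReflTransGen M.Step
          ⟨[Sum.inl c, Sum.inl a, Sum.inl a, Sum.inl b, Sum.inl b], 0, none⟩
          ⟨[Sum.inl c, Sum.inl a, Sum.inl a, Sum.inr B, Sum.inl b], 2, some q⟩ :=
        .head (sla_stepR rfl hmc) <| .head (sla_stepR rfl hma) <| .head (sla_stepR rfl hma) <|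
        .head (sla_stepTurnL rfl hBq (by omega)) <| .refl
      have he := sla_accepts_endpoint hdet hca run (sla_deadL rfl hwla htra)
      simp at he
    · rcases (M.turnR q c).eq_empty_or_nonempty with htrc | ⟨Y, hY⟩
      · have run : Relation.ReflTransGen M.Step
            ⟨[Sum.inl c, Sum.inl a, Sum.inl a, Sum.inl b, Sum.inl b], 0, none⟩
            ⟨[Sum.inl c, Sum.inr A, Sum.inr A, Sum.inr B, Sum.inl b], 0, some q⟩ :=
          .head (sla_stepR rfl hmc) <| .head (sla_stepR rfl hma) <| .head (sla_stepR rfl hma) <|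
          .head (sla_stepTurnL rfl hBq (by omega)) <| .head (sla_stepWriteL rfl hA (by omega)) <|
          .head (sla_stepWriteL rfl hA (by omega)) <| .refl
        have he := sla_accepts_endpoint hdet hca run (sla_deadL0' rfl htrc)
        simp at he
      · have run : Relation.ReflTransGen M.Step
            ⟨[Sum.inl c, Sum.inl a, Sum.inl a, Sum.inl b, Sum.inl b], 0, none⟩
            ⟨[Sum.inr Y, Sum.inr A, Sum.inr A, Sum.inr B, Sum.inr B], 0, some q⟩ :=
          .head (sla_stepR rfl hmc) <| .head (sla_stepR rfl hma) <| .head (sla_stepR rfl hma) <|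
          .head (sla_stepTurnL rfl hBq (by omega)) <| .head (sla_stepWriteL rfl hA (by omega)) <|
          .head (sla_stepWriteL rfl hA (by omega)) <| .head (sla_stepTurnR rfl hY) <|
          .head (sla_stepSkipR rfl) <| .head (sla_stepSkipR rfl) <| .head (sla_stepSkipR rfl) <|
          .head (sla_stepTurnL rfl hBq (by omega)) <| .head (sla_stepSkipL rfl (by omega)) <|
          .head (sla_stepSkipL rfl (by omega)) <| .head (sla_stepSkipL rfl (by omega)) <| .refl
        have he := sla_accepts_endpoint hdet hca run (sla_deadL0 rfl)
        simp at he
  · -- main case: 1-1 matching of `b`s against `a`s; run the machine on d a⁴ b²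
    have runD : Relation.ReflTransGen M.Step
        ⟨[Sum.inl d, Sum.inl a, Sum.inl a, Sum.inl a, Sum.inl a, Sum.inl b, Sum.inl b], 0, none⟩
        ⟨[Sum.inl d, Sum.inl a, Sum.inl a, Sum.inr A, Sum.inr A, Sum.inr B, Sum.inr B], 7, none⟩ :=
      .head (sla_stepR rfl hmd) <| .head (sla_stepR rfl hma) <| .head (sla_stepR rfl hma) <|
      .head (sla_stepR rfl hma) <| .head (sla_stepR rfl hma) <|
      .head (sla_stepTurnL rfl hBq (by omega)) <| .head (sla_stepTurnR rfl hA) <|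
      .head (sla_stepSkipR rfl) <| .head (sla_stepTurnL rfl hBq (by omega)) <|
      .head (sla_stepSkipL rfl (by omega)) <| .head (sla_stepSkipL rfl (by omega)) <|
      .head (sla_stepTurnR rfl hA) <| .head (sla_stepSkipR rfl) <| .head (sla_stepSkipR rfl) <|
      .head (sla_stepSkipR rfl) <| .refl
    have he := sla_accepts_endpoint hdet hda runD (sla_accept_dead rfl)
    have hch := he.2.2
    simp only [SLA.Cfg.tape, List.map_cons, List.map_nil, List.cons_append, List.nil_append,
      List.Chain', List.isChain_cons_cons, List.isChain_singleton, and_true] at hch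
    obtain ⟨q1, q2, q3, q4, q5, q6, q7, q8⟩ := hch
    -- now the machine also accepts d a⁵ b², a contradiction
    have runD5 : Relation.ReflTransGen M.Step
        ⟨[Sum.inl d, Sum.inl a, Sum.inl a, Sum.inl a, Sum.inl a, Sum.inl a,
          Sum.inl b, Sum.inl b], 0, none⟩
        ⟨[Sum.inl d, Sum.inl a, Sum.inl a, Sum.inl a, Sum.inr A, Sum.inr A,
          Sum.inr B, Sum.inr B], 8, none⟩ :=
      .head (sla_stepR rfl hmd) <| .head (sla_stepR rfl hma) <| .head (sla_stepR rfl hma) <|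
      .head (sla_stepR rfl hma) <| .head (sla_stepR rfl hma) <| .head (sla_stepR rfl hma) <|
      .head (sla_stepTurnL rfl hBq (by omega)) <| .head (sla_stepTurnR rfl hA) <|
      .head (sla_stepSkipR rfl) <| .head (sla_stepTurnL rfl hBq (by omega)) <|
      .head (sla_stepSkipL rfl (by omega)) <| .head (sla_stepSkipL rfl (by omega)) <|
      .head (sla_stepTurnR rfl hA) <| .head (sla_stepSkipR rfl) <| .head (sla_stepSkipR rfl) <|
      .head (sla_stepSkipR rfl) <| .refl
    refine not_mem_d5 ((h _).1 ⟨_, runD5, ?_⟩)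
    simp only [List.map_cons, List.map_nil, List.cons_append, List.nil_append,
      List.Chain', List.isChain_cons_cons, List.isChain_singleton, and_true]
    exact ⟨q1, q2, q3, q3, q4, q5, q6, q7, q8⟩

end Part2main

/-- The language `{c aⁿ bⁿ} ∪ {d a²ⁿ bⁿ}` is deterministic context-free, yet it is
not accepted by any deterministic strongly limited automaton. -/
theorem L18_dcf_not_det_sla :
    L18.IsDetContextFree ∧ ∀ M : SLA ABCD, M.Deterministic → M.lang ≠ L18 :=
  ⟨part1, fun M hdet hL => sla_part2 M hdet hL⟩
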